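/- If a graph Γ of connectivity 1 is arc-transitive, then its lobes are arc-transitive, pairwise isomorphic, and every vertex of Γ lies in the same number of lobes. -/

import Mathlib

open SimpleGraph

variable {V : Type*}

/-- Two edges are related iff equal or they lie on a common cycle. -/
def EdgeRel (G : SimpleGraph V) (e₁ e₂ : Sym2 V) : Prop :=
  e₁ = e₂ ∨ ∃ (v : V) (c : G.Walk v v), c.IsCycle ∧ e₁ ∈ c.edges ∧ e₂ ∈ c.edges

/-- The set of edges in the lobe of `e`. -/
def lobeEdges (G : SimpleGraph V) (e : Sym2 V) : Set (Sym2 V) :=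
  {f | f ∈ G.edgeSet ∧ EdgeRel G e f}

/-- The lobe of an edge `e`, as a subgraph. -/
def lobeSubgraph (G : SimpleGraph V) (e : Sym2 V) : G.Subgraph where
  verts := {v | ∃ f ∈ lobeEdges G e, v ∈ f}
  Adj u w := G.Adj u w ∧ EdgeRel G e s(u, w)
  adj_sub h := h.1
  edge_vert h := ⟨_, ⟨h.1, h.2⟩, Sym2.mem_mk_left _ _⟩
  symm := ⟨fun u w h => ⟨h.1.symm, by rw [Sym2.eq_swap]; exact h.2⟩⟩

/-- `Aut(G)` acts transitively on edges. -/
def EdgeTransitive (G : SimpleGraph V) : Prop :=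
  ∀ e₁ ∈ G.edgeSet, ∀ e₂ ∈ G.edgeSet, ∃ φ : G ≃g G, Sym2.map ⇑φ e₁ = e₂

/-- `Aut(G)` acts transitively on vertices. -/
def VertexTransitive (G : SimpleGraph V) : Prop :=
  ∀ u v : V, ∃ φ : G ≃g G, φ u = v

/-- `Aut(G)` acts transitively on arcs (ordered pairs of adjacent vertices). -/
def ArcTransitive (G : SimpleGraph V) : Prop :=
  ∀ u₁ v₁ u₂ v₂ : V, G.Adj u₁ v₁ → G.Adj u₂ v₂ →
    ∃ φ : G ≃g G, φ u₁ = u₂ ∧ φ v₁ = v₂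

/-- `G` has a cut vertex: a vertex whose removal disconnects the graph. -/
def HasCutVertex (G : SimpleGraph V) : Prop :=
  ∃ v : V, ¬ (G.induce {w | w ≠ v}).Connected

/-- `G` has connectivity 1: connected with a cut vertex. -/
def ConnOne (G : SimpleGraph V) : Prop := G.Connected ∧ HasCutVertex G

/-- The set of lobes (as edge-classes) containing the vertex `v`. -/
def lobesAt (G : SimpleGraph V) (v : V) : Set (Set (Sym2 V)) :=
  {L | (∃ e ∈ G.edgeSet, L = lobeEdges G e) ∧ ∃ f ∈ L, v ∈ f}


namespace SimpleGraph.Walk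

variable {G : SimpleGraph V}

lemma end_mem_support_tail {u v : V} (p : G.Walk u v) (hp : ¬ p.Nil) :
    v ∈ p.support.tail := by
  have hlen : p.support.tail.length = p.length := by
    have := p.length_support; simp [List.length_tail, this]
  have hne : p.support.tail ≠ [] := by
    intro h
    rw [h] at hlen
    simp at hlen
    exact hp (nil_iff_length_eq.mpr hlen.symm)
  have hgl : p.support.tail.getLast hne = v := by
    rw [List.getLast_tail]
    exact p.getLast_support
  have hm := List.getLast_mem hne
  rwa [hgl] at hm

lemma mem_support_iff_mem_tail {v z : V} (c : G.Walk v v) (hc : ¬ c.Nil) :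
    z ∈ c.support ↔ z ∈ c.support.tail := by
  constructor
  · intro h
    rcases (c.mem_support_iff).mp h with rfl | h
    · exact c.end_mem_support_tail hc
    · exact h
  · intro h
    rw [c.support_eq_cons]
    exact List.mem_cons_of_mem _ h

lemma nil_support_tail {u v : V} (p : G.Walk u v) (hp : p.Nil) :
    p.support.tail = [] := by
  have hlen : p.support.tail.length = p.length := by
    have := p.length_support; simp [List.length_tail, this]
  rw [nil_iff_length_eq] at hp
  rw [hp] at hlen
  exact List.eq_nil_of_length_eq_zero hlen
lemma exists_firstHit {u v : V} (w : G.Walk u v) (S : Set V)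
    (hS : ∃ z ∈ w.support, z ∈ S) :
    ∃ (x : V) (w₁ : G.Walk u x) (w₂ : G.Walk x v),
      w = w₁.append w₂ ∧ x ∈ S ∧ ∀ z ∈ w₁.support, z ∈ S → z = x := by
  induction w with
  | nil =>
    obtain ⟨z, hz, hzS⟩ := hS
    simp only [support_nil, List.mem_singleton] at hz
    subst hz
    exact ⟨_, Walk.nil, Walk.nil, rfl, hzS, by simp⟩
  | @cons a b c h p ih =>
    by_cases ha : a ∈ S
    · exact ⟨a, Walk.nil, Walk.cons h p, rfl, ha, by simp⟩
    · obtain ⟨z, hz, hzS⟩ := hS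
      rw [support_cons, List.mem_cons] at hz
      rcases hz with rfl | hz
      · exact absurd hzS ha
      · obtain ⟨x, w₁, w₂, heq, hxS, hw₁⟩ := ih ⟨z, hz, hzS⟩
        refine ⟨x, Walk.cons h w₁, w₂, by rw [cons_append, heq], hxS, ?_⟩
        intro z' hz' hz'S
        rw [support_cons, List.mem_cons] at hz'
        rcases hz' with rfl | hz'
        · exact absurd hz'S ha
        · exact hw₁ z' hz' hz'S

lemma length_eq_one_of_mem_edges {x y : V} {P : G.Walk x y} (hP : P.IsPath)
    (he : s(x, y) ∈ P.edges) : P.length = 1 := by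
  induction P with
  | nil => simp at he
  | @cons a b c h p ih =>
    rw [edges_cons, List.mem_cons] at he
    rw [cons_isPath_iff] at hP
    rcases he with he | he
    · rw [Sym2.eq_iff] at he
      rcases he with ⟨-, rfl⟩ | ⟨rfl, rfl⟩
      · -- p : Walk c c, a path, so nil
        have : p.length = 0 := by
          by_contra hne
          have hnil : ¬ p.Nil := by rwa [nil_iff_length_eq]
          have := p.end_mem_support_tail hnil
          have hnd := (isPath_def _).mp hP.1
          rw [p.support_eq_cons] at hnd
          exact (List.nodup_cons.mp hnd).1 this
        simp [this]
      · exact absurd rfl h.ne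
    · exact absurd (p.fst_mem_support_of_mem_edges he) hP.2

lemma edge_eq_of_internal {S : Set V} {x y : V} {P : G.Walk x y}
    (hint : ∀ z ∈ P.support, z ∈ S → z = x ∨ z = y)
    {f : Sym2 V} (hf : f ∈ P.edges) (hfS : ∀ z ∈ f, z ∈ S) : f = s(x, y) := by
  induction f with
  | _ c d =>
    have hc : c ∈ P.support := P.fst_mem_support_of_mem_edges hf
    have hd : d ∈ P.support := P.snd_mem_support_of_mem_edges hf
    have hcd : c ≠ d := (P.adj_of_mem_edges hf).ne
    rcases hint c hc (hfS c (Sym2.mem_mk_left c d)) with rfl | rfl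
    · rcases hint d hd (hfS d (Sym2.mem_mk_right c d)) with rfl | rfl
      · exact absurd rfl hcd
      · rfl
    · rcases hint d hd (hfS d (Sym2.mem_mk_right c d)) with rfl | rfl
      · exact Sym2.eq_swap
      · exact absurd rfl hcd

lemma glue_cycle {x y : V} {P : G.Walk x y} {A : G.Walk y x}
    (hP : P.IsPath) (hA : A.IsPath) (hxy : x ≠ y)
    (hsup : ∀ z, z ∈ P.support → z ∈ A.support → z = x ∨ z = y)
    (hedge : ∀ f ∈ P.edges, f ∉ A.edges) :
    (P.append A).IsCycle := by
  rw [isCycle_def]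
  refine ⟨?_, ?_, ?_⟩
  · rw [isTrail_def, edges_append, List.nodup_append]
    exact ⟨hP.isTrail.edges_nodup, hA.isTrail.edges_nodup, fun f hf g hg hfg => hedge f hf (hfg ▸ hg)⟩
  · intro hnil
    have := congrArg Walk.length hnil
    rw [length_append] at this
    simp only [length_nil] at this
    exact hxy (eq_of_length_eq_zero (p := P) (by omega))
  · rw [tail_support_append, List.nodup_append]
    have hPnd := (isPath_def _).mp hP
    have hAnd := (isPath_def _).mp hA
    refine ⟨hPnd.tail, hAnd.tail, ?_⟩
    intro z hzP b hzA hzb; subst hzb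
    have hzP' : z ∈ P.support := by
      rw [P.support_eq_cons]; exact List.mem_cons_of_mem _ hzP
    have hzA' : z ∈ A.support := by
      rw [A.support_eq_cons]; exact List.mem_cons_of_mem _ hzA
    rcases hsup z hzP' hzA' with rfl | rfl
    · rw [P.support_eq_cons] at hPnd
      exact (List.nodup_cons.mp hPnd).1 hzP
    · rw [A.support_eq_cons] at hAnd
      exact (List.nodup_cons.mp hAnd).1 hzA

lemma cycle_start_edge {v : V} {c : G.Walk v v} (hc : c.IsCycle) {e : Sym2 V}
    (he : e ∈ c.edges) :
    ∃ (a b : V) (hab : G.Adj a b) (q : G.Walk b a),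
      (Walk.cons hab q).IsCycle ∧ e = s(a, b) ∧
      (∀ f, f ∈ (Walk.cons hab q).edges ↔ f ∈ c.edges) ∧
      (∀ z, z ∈ (Walk.cons hab q).support ↔ z ∈ c.support) := by
  classical
  obtain ⟨d, hd, rfl⟩ : ∃ d ∈ c.darts, d.edge = e := by
    rw [Walk.edges] at he
    obtain ⟨d, hd, hde⟩ := List.mem_map.mp he
    exact ⟨d, hd, hde⟩
  have ha : d.fst ∈ c.support := c.dart_fst_mem_support_of_mem_darts hd
  have hc' : (c.rotate _ ha).IsCycle := hc.rotate ha
  have hd' : d ∈ (c.rotate _ ha).darts := ((c.rotate_darts _ ha).mem_iff).mpr hd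
  obtain ⟨b, hab, q, hq⟩ := not_nil_iff.mp hc'.not_nil
  rw [hq] at hc' hd'
  have hqpath : q.IsPath := ((cons_isCycle_iff q hab).mp hc').1
  have hdeq : d = ⟨(d.fst, b), hab⟩ := by
    rw [darts_cons, List.mem_cons] at hd'
    rcases hd' with h | h
    · exact h
    · exfalso
      have hfst : d.fst ∈ q.darts.map (·.fst) := List.mem_map_of_mem h
      rw [map_fst_darts] at hfst
      have hne : q.support ≠ [] := q.support_ne_nil
      have hsplit := List.dropLast_append_getLast hne
      rw [q.getLast_support] at hsplit
      have hnd : q.support.Nodup := (isPath_def _).mp hqpath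
      rw [← hsplit, List.nodup_append] at hnd
      exact hnd.2.2 _ hfst _ (List.mem_singleton_self _) rfl
  have hedge : d.edge = s(d.fst, b) := by rw [hdeq]; rfl
  refine ⟨d.fst, b, hab, q, hc', hedge, ?_, ?_⟩
  · intro f
    rw [← hq]
    exact ((c.rotate_edges _ ha).mem_iff)
  · intro z
    rw [← hq]
    rw [mem_support_iff_mem_tail _ (hc.rotate ha).not_nil,
      mem_support_iff_mem_tail _ hc.not_nil]
    exact (c.support_rotate _ ha).mem_iff
lemma exists_path_attached {a b : V} (hab : G.Adj a b) {q : G.Walk b a}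
    (hq : (Walk.cons hab q).IsCycle) (S : Set V)
    {z₁ z₂ : V} (hne : z₁ ≠ z₂) (hz₁S : z₁ ∈ S) (hz₂S : z₂ ∈ S)
    (hz₁ : z₁ ∈ (Walk.cons hab q).support) (hz₂ : z₂ ∈ (Walk.cons hab q).support) :
    ∃ (x y : V) (P : G.Walk x y), P.IsPath ∧ x ≠ y ∧ x ∈ S ∧ y ∈ S ∧
      s(a, b) ∈ P.edges ∧ ∀ z ∈ P.support, z ∈ S → z = x ∨ z = y := by
  have hqpath : q.IsPath := ((cons_isCycle_iff q hab).mp hq).1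
  have hqnd : q.support.Nodup := (isPath_def _).mp hqpath
  have hmemq : ∀ z, z ∈ (Walk.cons hab q).support → z ∈ q.support := by
    intro z hz
    rw [support_cons, List.mem_cons] at hz
    rcases hz with rfl | hz
    · exact q.end_mem_support
    · exact hz
  obtain ⟨x, q₁, q₂, rfl, hxS, hq₁S⟩ := q.exists_firstHit S ⟨z₁, hmemq _ hz₁, hz₁S⟩
  rw [support_append] at hqnd
  obtain ⟨h1nd, h2tnd, hdisj'⟩ := List.nodup_append.mp hqnd
  have hdisj : ∀ {z}, z ∈ q₁.support → z ∉ q₂.support.tail := fun h1 h2 => hdisj' _ h1 _ h2 rfl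
  have hxq₁ : x ∈ q₁.support := q₁.end_mem_support
  have hF : ∀ z, z ∈ q₂.support → z ∈ q₁.support → z = x := by
    intro z hz2 hz1
    rcases (q₂.mem_support_iff).mp hz2 with rfl | hz2t
    · rfl
    · exact absurd hz2t (hdisj hz1)
  have hq₂nd : q₂.support.Nodup := by
    rw [q₂.support_eq_cons]
    exact List.nodup_cons.mpr ⟨fun h => (hdisj hxq₁) h, h2tnd⟩
  by_cases haS : a ∈ S
  · by_cases hxa : x = a
    · subst hxa
      exfalso
      have hq₂nil : q₂.Nil := by
        by_contra hn
        exact (hdisj hxq₁) (q₂.end_mem_support_tail hn)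
      have htail : q₂.support.tail = [] := q₂.nil_support_tail hq₂nil
      have hall : ∀ z, z ∈ (Walk.cons hab (q₁.append q₂)).support → z ∈ S → z = x := by
        intro z hz hzS
        have hz' := hmemq z hz
        rw [support_append, htail, List.append_nil] at hz'
        exact hq₁S z hz' hzS
      exact hne ((hall z₁ hz₁ hz₁S).trans (hall z₂ hz₂ hz₂S).symm)
    · have hq₂notnil : ¬ q₂.Nil := by
        intro hn
        exact hxa (eq_of_length_eq_zero (nil_iff_length_eq.mp hn))
      have haq₁ : a ∉ q₁.support := fun h => (hdisj h) (q₂.end_mem_support_tail hq₂notnil)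
      refine ⟨a, x, Walk.cons hab q₁, ?_, fun h => hxa h.symm, haS, hxS, ?_, ?_⟩
      · rw [cons_isPath_iff]
        exact ⟨(isPath_def _).mpr h1nd, haq₁⟩
      · rw [edges_cons]
        exact List.mem_cons_self
      · intro z hz hzS
        rw [support_cons, List.mem_cons] at hz
        rcases hz with rfl | hz
        · exact Or.inl rfl
        · exact Or.inr (hq₁S z hz hzS)
  · have hxrev : x ∈ q₂.reverse.support := by
      rw [support_reverse, List.mem_reverse]
      exact q₂.start_mem_support
    obtain ⟨y, r₁, r₂, hre, hyS, hr₁S⟩ := q₂.reverse.exists_firstHit S ⟨x, hxrev, hxS⟩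
    have hrevnd : q₂.reverse.support.Nodup := by
      rw [support_reverse]; exact (List.nodup_reverse.mpr hq₂nd)
    rw [hre, support_append] at hrevnd
    obtain ⟨hr₁nd, hr₂tnd, hrdisj'⟩ := List.nodup_append.mp hrevnd
    have hrdisj : ∀ {z}, z ∈ r₁.support → z ∉ r₂.support.tail :=
      fun h1 h2 => hrdisj' _ h1 _ h2 rfl
    have hyr₁ : y ∈ r₁.support := r₁.end_mem_support
    by_cases hyx : y = x
    · subst hyx
      exfalso
      have hr₂nil : r₂.Nil := by
        by_contra hn
        exact (hrdisj hyr₁) (r₂.end_mem_support_tail hn)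
      have htail : r₂.support.tail = [] := r₂.nil_support_tail hr₂nil
      have hq₂S : ∀ z, z ∈ q₂.support → z ∈ S → z = y := by
        intro z hz hzS
        have hz' : z ∈ q₂.reverse.support := by
          rw [support_reverse, List.mem_reverse]; exact hz
        rw [hre, support_append, htail, List.append_nil] at hz'
        exact hr₁S z hz' hzS
      have hall : ∀ z, z ∈ (Walk.cons hab (q₁.append q₂)).support → z ∈ S → z = y := by
        intro z hz hzS
        rw [support_cons, List.mem_cons] at hz
        rcases hz with rfl | hz
        · exact absurd hzS haS
        · rw [support_append, List.mem_append] at hz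
          rcases hz with hz | hz
          · exact hq₁S z hz hzS
          · exact hq₂S z (by rw [q₂.support_eq_cons]; exact List.mem_cons_of_mem _ hz) hzS
      exact hne ((hall z₁ hz₁ hz₁S).trans (hall z₂ hz₂ hz₂S).symm)
    · have hxr₁ : x ∉ r₁.support := fun h => hyx (hr₁S x h hxS).symm
      refine ⟨y, x, r₁.reverse.append (Walk.cons hab q₁), ?_, hyx, hyS, hxS, ?_, ?_⟩
      · rw [isPath_def, support_append]
        have htl : (Walk.cons hab q₁).support.tail = q₁.support := by
          rw [support_cons, List.tail_cons]
        rw [htl, List.nodup_append]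
        refine ⟨by rw [support_reverse]; exact (List.nodup_reverse.mpr hr₁nd), h1nd, ?_⟩
        intro z hz b hz1 hzb; subst hzb
        rw [support_reverse, List.mem_reverse] at hz
        have hzq₂ : z ∈ q₂.support := by
          have hz' : z ∈ q₂.reverse.support := by
            rw [hre, support_append, List.mem_append]
            exact Or.inl hz
          rwa [support_reverse, List.mem_reverse] at hz'
        have hzx : z = x := hF z hzq₂ hz1
        subst hzx
        exact hxr₁ hz
      · rw [edges_append, List.mem_append, edges_cons]
        exact Or.inr (List.mem_cons_self)
      · intro z hz hzS
        rw [support_append, List.mem_append] at hz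
        have htl : (Walk.cons hab q₁).support.tail = q₁.support := by
          rw [support_cons, List.tail_cons]
        rw [htl] at hz
        rcases hz with hz | hz
        · rw [support_reverse, List.mem_reverse] at hz
          exact Or.inl (hr₁S z hz hzS)
        · exact Or.inr (hq₁S z hz hzS)

lemma mem_support_of_mem_edges' {u v z : V} (p : G.Walk u v) {f : Sym2 V}
    (hf : f ∈ p.edges) (hz : z ∈ f) : z ∈ p.support := by
  revert hf hz
  induction f using Sym2.ind with
  | _ c d =>
    intro hf hz
    rcases Sym2.mem_iff.mp hz with rfl | rfl
    · exact p.fst_mem_support_of_mem_edges hf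
    · exact p.snd_mem_support_of_mem_edges hf
end SimpleGraph.Walk


section Lobes

variable {G : SimpleGraph V}

lemma edgeRel_refl (G : SimpleGraph V) (e : Sym2 V) : EdgeRel G e e := Or.inl rfl

lemma edgeRel_symm {e f : Sym2 V} (h : EdgeRel G e f) : EdgeRel G f e := by
  rcases h with rfl | ⟨v, c, hc, h1, h2⟩
  · exact Or.inl rfl
  · exact Or.inr ⟨v, c, hc, h2, h1⟩

lemma edgeRel_trans {e₁ e₂ e₃ : Sym2 V} (h12 : EdgeRel G e₁ e₂)
    (h23 : EdgeRel G e₂ e₃) : EdgeRel G e₁ e₃ := by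
  classical
  rcases h12 with rfl | ⟨v₁, c₁, hc₁, he₁, he₂⟩
  · exact h23
  rcases h23 with rfl | ⟨v₂, c₂, hc₂, he₂', he₃⟩
  · exact Or.inr ⟨v₁, c₁, hc₁, he₁, he₂⟩
  by_cases hin : e₁ ∈ c₂.edges
  · exact Or.inr ⟨v₂, c₂, hc₂, hin, he₃⟩
  obtain ⟨a, b, hab, q, hcyc, heab, hedgeiff, hsupiff⟩ := Walk.cycle_start_edge hc₁ he₁
  set S : Set V := {z | z ∈ c₂.support} with hSdef
  have hrep : ∃ z₁ z₂, e₂ = s(z₁, z₂) := by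
    induction e₂ using Sym2.ind with
    | _ w₁ w₂ => exact ⟨w₁, w₂, rfl⟩
  obtain ⟨z₁, z₂, rfl⟩ := hrep
  have hzadj : G.Adj z₁ z₂ := c₂.adj_of_mem_edges he₂'
  have hz₁S : z₁ ∈ S := c₂.fst_mem_support_of_mem_edges he₂'
  have hz₂S : z₂ ∈ S := c₂.snd_mem_support_of_mem_edges he₂'
  have he₂c : s(z₁, z₂) ∈ (Walk.cons hab q).edges := (hedgeiff _).mpr he₂
  have hz₁c : z₁ ∈ (Walk.cons hab q).support := Walk.fst_mem_support_of_mem_edges _ he₂c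
  have hz₂c : z₂ ∈ (Walk.cons hab q).support := Walk.snd_mem_support_of_mem_edges _ he₂c
  obtain ⟨x, y, P, hPp, hxy, hxS, hyS, hePb, hint⟩ :=
    Walk.exists_path_attached hab hcyc S hzadj.ne hz₁S hz₂S hz₁c hz₂c
  rw [← heab] at hePb
  -- P's edges avoid c₂
  have hPdisj : ∀ f ∈ P.edges, f ∉ c₂.edges := by
    intro f hfP hfc
    have hfS : ∀ z ∈ f, z ∈ S := fun z hz => Walk.mem_support_of_mem_edges' c₂ hfc hz
    have hfeq : f = s(x, y) := Walk.edge_eq_of_internal hint hfP hfS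
    have hlen : P.length = 1 := Walk.length_eq_one_of_mem_edges hPp (hfeq ▸ hfP)
    have hlenE : P.edges.length = 1 := by rw [Walk.length_edges]; exact hlen
    obtain ⟨g, hg⟩ := List.length_eq_one_iff.mp hlenE
    rw [hg, List.mem_singleton] at hfP hePb
    exact hin (by rw [hePb, ← hfP]; exact hfc)
  -- split c₂ into two arcs at y and x
  have hyc₂ : y ∈ c₂.support := hyS
  have hCcyc : (c₂.rotate _ hyc₂).IsCycle := hc₂.rotate hyc₂
  obtain ⟨u₂, h₂, w, hw⟩ := Walk.not_nil_iff.mp hCcyc.not_nil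
  have hCcyc' := hCcyc
  rw [hw] at hCcyc'
  have hwpath : w.IsPath := ((Walk.cons_isCycle_iff w h₂).mp hCcyc').1
  have hmemrot : ∀ z, z ∈ (c₂.rotate _ hyc₂).support ↔ z ∈ c₂.support := by
    intro z
    rw [Walk.mem_support_iff_mem_tail _ hCcyc.not_nil,
      Walk.mem_support_iff_mem_tail _ hc₂.not_nil]
    exact (c₂.support_rotate _ hyc₂).mem_iff
  have hxC : x ∈ (c₂.rotate _ hyc₂).support := (hmemrot x).mpr hxS
  rw [hw, Walk.support_cons, List.mem_cons] at hxC
  have hxw : x ∈ w.support := by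
    rcases hxC with rfl | hxC
    · exact absurd rfl hxy
    · exact hxC
  set T := w.takeUntil x hxw with hTdef
  set D := w.dropUntil x hxw with hDdef
  have hTD : T.append D = w := w.take_spec hxw
  have hwnd : w.support.Nodup := (Walk.isPath_def _).mp hwpath
  have hwsupp : w.support = T.support ++ D.support.tail := by
    rw [← hTD, Walk.support_append]
  rw [hwsupp] at hwnd
  obtain ⟨hTnd, hDtnd, hTDdisj'⟩ := List.nodup_append.mp hwnd
  have hTDdisj : ∀ {z}, z ∈ T.support → z ∉ D.support.tail := fun h1 h2 => hTDdisj' _ h1 _ h2 rfl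
  have hDne : ¬ D.Nil := by
    intro hn
    exact hxy (Walk.eq_of_length_eq_zero (Walk.nil_iff_length_eq.mp hn))
  have hyD : y ∈ D.support.tail := D.end_mem_support_tail hDne
  have hyT : y ∉ T.support := fun hh => (hTDdisj hh) hyD
  have hTpath : T.IsPath := hwpath.takeUntil hxw
  have hDpath : D.IsPath := hwpath.dropUntil hxw
  have hA₁path : (Walk.cons h₂ T).IsPath := by
    rw [Walk.cons_isPath_iff]; exact ⟨hTpath, hyT⟩
  have hCS : ∀ z, z ∈ (Walk.cons h₂ w).support → z ∈ S := by
    intro z hz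
    rw [← hw] at hz
    exact (hmemrot z).mp hz
  have hA₁S : ∀ z, z ∈ (Walk.cons h₂ T).support → z ∈ S := by
    intro z hz
    rw [Walk.support_cons, List.mem_cons] at hz
    apply hCS
    rw [Walk.support_cons, List.mem_cons]
    rcases hz with rfl | hz
    · exact Or.inl rfl
    · exact Or.inr (w.support_takeUntil_subset hxw hz)
  have hDS : ∀ z, z ∈ D.support → z ∈ S := by
    intro z hz
    apply hCS
    rw [Walk.support_cons, List.mem_cons]
    exact Or.inr (w.support_dropUntil_subset hxw hz)
  have hCe : ∀ f, f ∈ (Walk.cons h₂ w).edges → f ∈ c₂.edges := by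
    intro f hf
    rw [← hw] at hf
    exact ((c₂.rotate_edges _ hyc₂).mem_iff).mp hf
  have hwe : w.edges = T.edges ++ D.edges := by
    rw [← hTD, Walk.edges_append]
  have hTe : ∀ f, f ∈ T.edges → f ∈ c₂.edges := by
    intro f hf
    apply hCe
    rw [Walk.edges_cons]
    exact List.mem_cons_of_mem _ (by rw [hwe]; exact List.mem_append_left _ hf)
  have hDe : ∀ f, f ∈ D.edges → f ∈ c₂.edges := by
    intro f hf
    apply hCe
    rw [Walk.edges_cons]
    exact List.mem_cons_of_mem _ (by rw [hwe]; exact List.mem_append_right _ hf)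
  have he₃C : e₃ ∈ (Walk.cons h₂ w).edges := by
    have hh := ((c₂.rotate_edges _ hyc₂).mem_iff).mpr he₃
    rwa [hw] at hh
  rw [Walk.edges_cons, List.mem_cons, hwe, List.mem_append] at he₃C
  rcases he₃C with he₃C | he₃C | he₃C
  · -- e₃ is the first edge of the arc cons h₂ T : Walk y x
    refine Or.inr ⟨x, P.append (Walk.cons h₂ T), ?_, ?_, ?_⟩
    · refine Walk.glue_cycle hPp hA₁path hxy ?_ ?_
      · exact fun z hzP hzA => hint z hzP (hA₁S z hzA)
      · intro f hf hfA
        apply hPdisj f hf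
        rw [Walk.edges_cons, List.mem_cons] at hfA
        rcases hfA with rfl | hfA
        · exact hCe _ (by rw [Walk.edges_cons]; exact List.mem_cons_self)
        · exact hTe _ hfA
    · rw [Walk.edges_append]
      exact List.mem_append_left _ hePb
    · rw [Walk.edges_append]
      refine List.mem_append_right _ ?_
      rw [Walk.edges_cons, he₃C]
      exact List.mem_cons_self
  · refine Or.inr ⟨x, P.append (Walk.cons h₂ T), ?_, ?_, ?_⟩
    · refine Walk.glue_cycle hPp hA₁path hxy ?_ ?_
      · exact fun z hzP hzA => hint z hzP (hA₁S z hzA)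
      · intro f hf hfA
        apply hPdisj f hf
        rw [Walk.edges_cons, List.mem_cons] at hfA
        rcases hfA with rfl | hfA
        · exact hCe _ (by rw [Walk.edges_cons]; exact List.mem_cons_self)
        · exact hTe _ hfA
    · rw [Walk.edges_append]
      exact List.mem_append_left _ hePb
    · rw [Walk.edges_append]
      refine List.mem_append_right _ ?_
      rw [Walk.edges_cons]
      exact List.mem_cons_of_mem _ he₃C
  · -- e₃ in D : Walk x y; use D.reverse : Walk y x
    refine Or.inr ⟨x, P.append D.reverse, ?_, ?_, ?_⟩
    · refine Walk.glue_cycle hPp hDpath.reverse hxy ?_ ?_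
      · intro z hzP hzA
        rw [Walk.support_reverse, List.mem_reverse] at hzA
        exact hint z hzP (hDS z hzA)
      · intro f hf hfA
        rw [Walk.edges_reverse, List.mem_reverse] at hfA
        exact hPdisj f hf (hDe f hfA)
    · rw [Walk.edges_append]
      exact List.mem_append_left _ hePb
    · rw [Walk.edges_append]
      refine List.mem_append_right _ ?_
      rw [Walk.edges_reverse, List.mem_reverse]
      exact he₃C

end Lobes



section LobeIso

variable {G : SimpleGraph V}

lemma sym2_map_symm_map (φ : G ≃g G) (e : Sym2 V) :
    Sym2.map ⇑φ.symm (Sym2.map ⇑φ e) = e := by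
  rw [Sym2.map_map]
  have h : (⇑φ.symm ∘ ⇑φ) = id := funext fun z => φ.symm_apply_apply z
  rw [h, Sym2.map_id, id]

lemma sym2_map_map_symm (φ : G ≃g G) (e : Sym2 V) :
    Sym2.map ⇑φ (Sym2.map ⇑φ.symm e) = e := by
  rw [Sym2.map_map]
  have h : (⇑φ ∘ ⇑φ.symm) = id := funext fun z => φ.apply_symm_apply z
  rw [h, Sym2.map_id, id]

lemma EdgeRel.map {e f : Sym2 V} (φ : G ≃g G) (h : EdgeRel G e f) :
    EdgeRel G (Sym2.map ⇑φ e) (Sym2.map ⇑φ f) := by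
  rcases h with rfl | ⟨v, c, hc, h1, h2⟩
  · exact Or.inl rfl
  · refine Or.inr ⟨φ v, c.map φ.toHom, Walk.IsCycle.map φ.injective hc, ?_, ?_⟩ <;>
    · rw [Walk.edges_map]
      exact List.mem_map_of_mem ‹_›

lemma lobeEdges_map (φ : G ≃g G) (e : Sym2 V) :
    Sym2.map ⇑φ '' lobeEdges G e = lobeEdges G (Sym2.map ⇑φ e) := by
  ext g
  constructor
  · rintro ⟨f, ⟨hfe, hrel⟩, rfl⟩
    exact ⟨φ.map_mem_edgeSet_iff.mpr hfe, hrel.map φ⟩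
  · rintro ⟨hge, hrel⟩
    refine ⟨Sym2.map ⇑φ.symm g, ⟨φ.symm.map_mem_edgeSet_iff.mpr hge, ?_⟩,
      sym2_map_map_symm φ g⟩
    have h := hrel.map φ.symm
    rwa [sym2_map_symm_map] at h

lemma lobeEdges_eq_of_rel {e f : Sym2 V} (hrel : EdgeRel G e f) :
    lobeEdges G e = lobeEdges G f := by
  ext g
  exact ⟨fun hg => ⟨hg.1, edgeRel_trans (edgeRel_symm hrel) hg.2⟩,
    fun hg => ⟨hg.1, edgeRel_trans hrel hg.2⟩⟩

lemma lobeSubgraph_eq_of_lobeEdges_eq {e f : Sym2 V}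
    (h : lobeEdges G e = lobeEdges G f) : lobeSubgraph G e = lobeSubgraph G f := by
  have hadj : ∀ u w, (G.Adj u w ∧ EdgeRel G e s(u, w)) ↔
      (G.Adj u w ∧ EdgeRel G f s(u, w)) := by
    intro u w
    constructor
    · rintro ⟨ha, hr⟩
      have hm : s(u, w) ∈ lobeEdges G e := ⟨ha, hr⟩
      rw [h] at hm
      exact ⟨ha, hm.2⟩
    · rintro ⟨ha, hr⟩
      have hm : s(u, w) ∈ lobeEdges G f := ⟨ha, hr⟩
      rw [← h] at hm
      exact ⟨ha, hm.2⟩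
  refine SimpleGraph.Subgraph.ext ?_ ?_
  · show {v | ∃ g ∈ lobeEdges G e, v ∈ g} = {v | ∃ g ∈ lobeEdges G f, v ∈ g}
    rw [h]
  · ext u w
    exact hadj u w

lemma mem_lobe_verts_map (φ : G ≃g G) (e : Sym2 V) (v : V) :
    v ∈ (lobeSubgraph G e).verts ↔ φ v ∈ (lobeSubgraph G (Sym2.map ⇑φ e)).verts := by
  constructor
  · rintro ⟨f, hf, hv⟩
    refine ⟨Sym2.map ⇑φ f, ?_, ?_⟩
    · rw [← lobeEdges_map]
      exact Set.mem_image_of_mem _ hf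
    · exact Sym2.mem_map.mpr ⟨v, hv, rfl⟩
  · rintro ⟨f, hf, hv⟩
    rw [← lobeEdges_map] at hf
    obtain ⟨f', hf', rfl⟩ := hf
    refine ⟨f', hf', ?_⟩
    obtain ⟨z, hz, hzv⟩ := Sym2.mem_map.mp hv
    have hzeq : z = v := φ.injective hzv
    subst hzeq
    exact hz

/-- An automorphism of `G` induces an isomorphism from the lobe of `e` to the lobe
of the image of `e`. -/
def lobeIso (φ : G ≃g G) (e : Sym2 V) :
    (lobeSubgraph G e).coe ≃g (lobeSubgraph G (Sym2.map ⇑φ e)).coe where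
  toEquiv := φ.toEquiv.subtypeEquiv (mem_lobe_verts_map φ e)
  map_rel_iff' := by
    intro a b
    simp only [Equiv.subtypeEquiv_apply, Subgraph.coe_adj]
    show (G.Adj (φ a) (φ b) ∧ EdgeRel G (Sym2.map ⇑φ e) s(φ ↑a, φ ↑b)) ↔
      (G.Adj ↑a ↑b ∧ EdgeRel G e s(↑a, ↑b))
    rw [← Sym2.map_pair_eq]
    constructor
    · rintro ⟨ha, hr⟩
      refine ⟨φ.map_adj_iff.mp ha, ?_⟩
      have h := hr.map φ.symm
      rwa [sym2_map_symm_map, sym2_map_symm_map] at h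
    · rintro ⟨ha, hr⟩
      exact ⟨φ.map_adj_iff.mpr ha, hr.map φ⟩

@[simp] lemma lobeIso_apply_val (φ : G ≃g G) (e : Sym2 V)
    (x : (lobeSubgraph G e).verts) : (lobeIso φ e x : V) = φ ↑x := rfl

/-- Equal subgraphs have isomorphic (indeed equal) coercions. -/
def coeIsoOfEq {H₁ H₂ : G.Subgraph} (h : H₁ = H₂) : H₁.coe ≃g H₂.coe := by
  subst h
  exact RelIso.refl _

lemma coeIsoOfEq_val {H₁ H₂ : G.Subgraph} (h : H₁ = H₂) (x : H₁.verts) :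
    ((coeIsoOfEq h) x : V) = ↑x := by
  subst h
  rfl

lemma vertexTransitive_of_arcTransitive (hc : G.Connected) (h : ArcTransitive G) :
    VertexTransitive G := by
  intro u v
  by_cases huv : u = v
  · subst huv
    exact ⟨RelIso.refl G.Adj, rfl⟩
  · obtain ⟨w, hw⟩ : ∃ w, G.Adj u w := by
      obtain ⟨p⟩ := hc.preconnected u v
      cases p with
      | nil => exact absurd rfl huv
      | cons hadj q => exact ⟨_, hadj⟩
    obtain ⟨w', hw'⟩ : ∃ w', G.Adj v w' := by
      obtain ⟨p⟩ := hc.preconnected v u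
      cases p with
      | nil => exact absurd rfl (Ne.symm huv)
      | cons hadj q => exact ⟨_, hadj⟩
    obtain ⟨φ, h1, h2⟩ := h u w v w' hw hw'
    exact ⟨φ, h1⟩

lemma lobesAt_map (φ : G ≃g G) {u : V} {L : Set (Sym2 V)}
    (hL : L ∈ lobesAt G u) : Sym2.map ⇑φ '' L ∈ lobesAt G (φ u) := by
  obtain ⟨⟨e, he, rfl⟩, f, hf, huf⟩ := hL
  exact ⟨⟨Sym2.map ⇑φ e, φ.map_mem_edgeSet_iff.mpr he, lobeEdges_map φ e ▸ rfl⟩,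
    Sym2.map ⇑φ f, Set.mem_image_of_mem _ hf, Sym2.mem_map.mpr ⟨u, huf, rfl⟩⟩

end LobeIso


theorem stmt_10 {V : Type*} [Countable V] (G : SimpleGraph V) (hG : ConnOne G)
    (h : ArcTransitive G) :
    (∀ e ∈ G.edgeSet, ArcTransitive (lobeSubgraph G e).coe) ∧
    (∀ e₁ ∈ G.edgeSet, ∀ e₂ ∈ G.edgeSet,
      Nonempty ((lobeSubgraph G e₁).coe ≃g (lobeSubgraph G e₂).coe)) ∧
    (∀ u v : V, Cardinal.mk (lobesAt G u) = Cardinal.mk (lobesAt G v)) := by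
  refine ⟨?_, ?_, ?_⟩
  · -- lobes are arc-transitive
    intro e he u₁ v₁ u₂ v₂ h₁ h₂
    rw [Subgraph.coe_adj] at h₁ h₂
    have h₁' : G.Adj ↑u₁ ↑v₁ ∧ EdgeRel G e s(↑u₁, ↑v₁) := h₁
    have h₂' : G.Adj ↑u₂ ↑v₂ ∧ EdgeRel G e s(↑u₂, ↑v₂) := h₂
    obtain ⟨φ, hu, hv⟩ := h ↑u₁ ↑v₁ ↑u₂ ↑v₂ h₁'.1 h₂'.1
    have hrel2 : EdgeRel G (Sym2.map ⇑φ e) s(↑u₂, ↑v₂) := by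
      have hh := h₁'.2.map φ
      rwa [Sym2.map_pair_eq, hu, hv] at hh
    have hlobe : lobeEdges G (Sym2.map ⇑φ e) = lobeEdges G e :=
      (lobeEdges_eq_of_rel hrel2).trans (lobeEdges_eq_of_rel h₂'.2).symm
    have hsub : lobeSubgraph G (Sym2.map ⇑φ e) = lobeSubgraph G e :=
      lobeSubgraph_eq_of_lobeEdges_eq hlobe
    refine ⟨(lobeIso φ e).trans (coeIsoOfEq hsub), ?_, ?_⟩
    · apply Subtype.ext
      rw [RelIso.trans_apply, coeIsoOfEq_val, lobeIso_apply_val]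
      exact hu
    · apply Subtype.ext
      rw [RelIso.trans_apply, coeIsoOfEq_val, lobeIso_apply_val]
      exact hv
  · -- lobes are pairwise isomorphic
    intro e₁ he₁ e₂ he₂
    induction e₁ using Sym2.ind with
    | _ a b =>
    induction e₂ using Sym2.ind with
    | _ c d =>
    rw [mem_edgeSet] at he₁ he₂
    obtain ⟨φ, h1, h2⟩ := h a b c d he₁ he₂
    have hmap : Sym2.map ⇑φ s(a, b) = s(c, d) := by rw [Sym2.map_pair_eq, h1, h2]
    exact ⟨(lobeIso φ s(a, b)).trans (coeIsoOfEq (by rw [hmap]))⟩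
  · -- all vertices lie in the same number of lobes
    intro u v
    obtain ⟨φ, rfl⟩ := vertexTransitive_of_arcTransitive hG.1 h u v
    apply Cardinal.mk_congr
    refine Equiv.subtypeEquiv
      (Equiv.Set.congr ⟨Sym2.map ⇑φ, Sym2.map ⇑φ.symm,
        sym2_map_symm_map φ, sym2_map_map_symm φ⟩) ?_
    intro L
    show L ∈ lobesAt G u ↔ Sym2.map ⇑φ '' L ∈ lobesAt G (φ u)
    constructor
    · exact lobesAt_map φ
    · intro hL
      have hh := lobesAt_map φ.symm hL
      rw [φ.symm_apply_apply] at hh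
      have himg : Sym2.map ⇑φ.symm '' (Sym2.map ⇑φ '' L) = L := by
        rw [Set.image_image]
        simp only [sym2_map_symm_map]
        exact Set.image_id L
      rwa [himg] at hh
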